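/- Let G be a finite simple graph with positive real vertex weights ω, let S be an independent set of G, and let x ∈ N(S) satisfy ω(x) ≥ ω(S ∩ N(x)) + α_ω(G[N(x) \ N[S]]). Then there exists a maximum ω-weight independent set of G that does not contain S as a subset. -/
import Mathlib


open scoped Classical

/-- `S` is an independent set of vertices in `G`: no two members are adjacent. -/
def IsIndepSet {V : Type*} (G : SimpleGraph V) (S : Finset V) : Prop :=
  ∀ a ∈ S, ∀ b ∈ S, ¬ G.Adj a b

/-- The maximum total `w`-weight of an independent set of `G` contained in `A`
(the weighted independence number of the subgraph of `G` induced on `A`). -/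
noncomputable def alphaOn {V : Type*} [Fintype V] (G : SimpleGraph V) (w : V → ℝ)
    (A : Set V) : ℝ :=
  sSup {x : ℝ | ∃ S : Finset V, ↑S ⊆ A ∧ IsIndepSet G S ∧ x = ∑ v ∈ S, w v}

/-- The maximum total `w`-weight of an independent set of `G`. -/
noncomputable def alpha {V : Type*} [Fintype V] (G : SimpleGraph V) (w : V → ℝ) : ℝ :=
  alphaOn G w Set.univ

/-- `S` is a maximum `w`-weight independent set of `G`. -/
def IsMWIS {V : Type*} [Fintype V] (G : SimpleGraph V) (w : V → ℝ) (S : Finset V) : Prop :=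
  IsIndepSet G S ∧ ∑ v ∈ S, w v = alpha G w

/-- The closed neighborhood `N[v]` of a vertex. -/
def closedNbhd {V : Type*} (G : SimpleGraph V) (v : V) : Set V :=
  insert v (G.neighborSet v)

/-- The open neighborhood `N(S)` of a set of vertices. -/
def setNbhd {V : Type*} (G : SimpleGraph V) (S : Set V) : Set V :=
  (⋃ s ∈ S, G.neighborSet s) \ S

/-- The closed neighborhood `N[S]` of a set of vertices. -/
def closedSetNbhd {V : Type*} (G : SimpleGraph V) (S : Set V) : Set V :=
  setNbhd G S ∪ S

lemma alphaSet_finite {V : Type*} [Fintype V] (G : SimpleGraph V) (w : V → ℝ) (A : Set V) :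
    {x : ℝ | ∃ S : Finset V, ↑S ⊆ A ∧ IsIndepSet G S ∧ x = ∑ v ∈ S, w v}.Finite := by
  have h : {x : ℝ | ∃ S : Finset V, ↑S ⊆ A ∧ IsIndepSet G S ∧ x = ∑ v ∈ S, w v}
      ⊆ (fun S : Finset V => ∑ v ∈ S, w v) '' Set.univ := by
    rintro x ⟨S, _, _, rfl⟩; exact ⟨S, trivial, rfl⟩
  exact (Set.finite_univ.image _).subset h

lemma sum_le_alphaOn {V : Type*} [Fintype V] (G : SimpleGraph V) (w : V → ℝ) (A : Set V)
    (S : Finset V) (h1 : ↑S ⊆ A) (h2 : IsIndepSet G S) :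
    ∑ v ∈ S, w v ≤ alphaOn G w A :=
  le_csSup (alphaSet_finite G w A).bddAbove ⟨S, h1, h2, rfl⟩

lemma exists_mwis_aux {V : Type*} [Fintype V] (G : SimpleGraph V) (w : V → ℝ) :
    ∃ T : Finset V, IsIndepSet G T ∧ ∑ v ∈ T, w v = alphaOn G w Set.univ := by
  have hne : {x : ℝ | ∃ S : Finset V, ↑S ⊆ (Set.univ : Set V) ∧ IsIndepSet G S ∧
      x = ∑ v ∈ S, w v}.Nonempty :=
    ⟨0, ∅, by simp, by intro a ha; simp at ha, by simp⟩
  have := hne.csSup_mem (alphaSet_finite G w Set.univ)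
  obtain ⟨T, _, hind, hsum⟩ := this
  exact ⟨T, hind, hsum.symm⟩

theorem stmt_16 {V : Type*} [Fintype V] (G : SimpleGraph V) (w : V → ℝ)
    (hw : ∀ x, 0 < w x) (S : Finset V) (hSind : IsIndepSet G S)
    (x : V) (hx : x ∈ setNbhd G (↑S : Set V))
    (hwt : (∑ s ∈ S.filter (fun s => G.Adj x s), w s) +
        alphaOn G w (G.neighborSet x \ closedSetNbhd G (↑S : Set V)) ≤ w x) :
    ∃ T : Finset V, IsMWIS G w T ∧ ¬ S ⊆ T := by
  classical
  obtain ⟨T, hTind, hTsum⟩ := exists_mwis_aux G w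
  by_cases hST : S ⊆ T
  swap
  · exact ⟨T, ⟨hTind, hTsum⟩, hST⟩
  obtain ⟨hxU, hxS⟩ := hx
  simp only [Set.mem_iUnion, SimpleGraph.mem_neighborSet] at hxU
  obtain ⟨s0, hs0S, hs0adj⟩ := hxU
  have hxS : x ∉ S := by simpa using hxS
  have hxT : x ∉ T := fun hxT => hTind s0 (hST hs0S) x hxT hs0adj
  set T₁ : Finset V := T.filter (fun t => ¬ G.Adj x t) with hT₁
  have hxT₁ : x ∉ T₁ := fun h => hxT (Finset.mem_filter.1 h).1
  set T' : Finset V := insert x T₁ with hT'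
  have hT'ind : IsIndepSet G T' := by
    intro a ha b hb hab
    rcases Finset.mem_insert.1 ha with rfl | ha
    · rcases Finset.mem_insert.1 hb with rfl | hb
      · exact G.irrefl hab
      · exact (Finset.mem_filter.1 hb).2 hab
    · rcases Finset.mem_insert.1 hb with rfl | hb
      · exact (Finset.mem_filter.1 ha).2 hab.symm
      · exact hTind a (Finset.mem_filter.1 ha).1 b (Finset.mem_filter.1 hb).1 hab
  -- key inequality
  have hsplit : T.filter (fun t => G.Adj x t)
      = S.filter (fun t => G.Adj x t) ∪ (T \ S).filter (fun t => G.Adj x t) := by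
    rw [← Finset.filter_union, Finset.union_sdiff_of_subset hST]
  have hdisj : Disjoint (S.filter (fun t => G.Adj x t))
      ((T \ S).filter (fun t => G.Adj x t)) := by
    apply Finset.disjoint_filter_filter
    exact Finset.disjoint_sdiff
  have hsub : ↑((T \ S).filter (fun t => G.Adj x t))
      ⊆ G.neighborSet x \ closedSetNbhd G (↑S : Set V) := by
    intro t ht
    simp only [Finset.coe_filter, Set.mem_setOf_eq, Finset.mem_sdiff] at ht
    obtain ⟨⟨htT, htS⟩, hadj⟩ := ht
    refine ⟨hadj, ?_⟩
    rintro (⟨htU, -⟩ | htS')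
    · simp only [Set.mem_iUnion, SimpleGraph.mem_neighborSet] at htU
      obtain ⟨s, hsS, hadj'⟩ := htU
      simp only [Finset.mem_coe] at hsS
      exact hTind s (hST hsS) t htT hadj'
    · exact htS (by simpa using htS')
  have hindsub : IsIndepSet G ((T \ S).filter (fun t => G.Adj x t)) := by
    intro a ha b hb
    exact hTind a (Finset.sdiff_subset (Finset.mem_filter.1 ha).1)
      b (Finset.sdiff_subset (Finset.mem_filter.1 hb).1)
  have hkey : ∑ t ∈ T.filter (fun t => G.Adj x t), w t ≤ w x := by
    rw [hsplit, Finset.sum_union hdisj]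
    calc _ ≤ (∑ s ∈ S.filter (fun s => G.Adj x s), w s) +
        alphaOn G w (G.neighborSet x \ closedSetNbhd G (↑S : Set V)) := by
          gcongr
          exact sum_le_alphaOn G w _ _ hsub hindsub
      _ ≤ w x := hwt
  have hsumT : ∑ v ∈ T, w v
      = (∑ t ∈ T.filter (fun t => G.Adj x t), w t) + ∑ t ∈ T₁, w t :=
    (Finset.sum_filter_add_sum_filter_not T _ w).symm
  have hsumT' : ∑ v ∈ T', w v = w x + ∑ t ∈ T₁, w t := Finset.sum_insert hxT₁
  have hge : alpha G w ≤ ∑ v ∈ T', w v := by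
    rw [hsumT']
    calc alpha G w = ∑ v ∈ T, w v := hTsum.symm
      _ ≤ w x + ∑ t ∈ T₁, w t := by rw [hsumT]; gcongr
  have hle : ∑ v ∈ T', w v ≤ alpha G w :=
    sum_le_alphaOn G w Set.univ T' (by simp) hT'ind
  refine ⟨T', ⟨hT'ind, le_antisymm hle hge⟩, fun hsub' => ?_⟩
  have hs0T' := hsub' hs0S
  rcases Finset.mem_insert.1 hs0T' with rfl | h
  · exact hxS hs0S
  · exact (Finset.mem_filter.1 h).2 hs0adj.symm
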